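/- For every x in the special orthogonal group SO(n) and all indices 1 ≤ j, k, α, β ≤ n: Σ_{1≤r<s≤n} (x·Y_rs·Y_rs)_{jα} = −((n−1)/2)·x_{jα}, and Σ_{1≤r<s≤n} (x·Y_rs)_{jα}·(x·Y_rs)_{kβ} = −(1/2)·(x_{kα}·x_{jβ} − δ_{kj}·δ_{αβ}). Equivalently, the matrix-coefficient functions x_{jα} of the standard representation of SO(n) satisfy τ(x_{jα}) = −((n−1)/2)·x_{jα} and κ(x_{jα}, x_{kβ}) = −(1/2)·(x_{kα}·x_{jβ} − δ_{kj}·δ_{αβ}). -/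

import Mathlib

open Matrix

/-- The matrix `Y_rs ∈ ℝ^{n×n}` with `(r,s)`-entry `1/√2`, `(s,r)`-entry `-1/√2` and
all other entries `0`; for `r < s` these form the canonical orthonormal basis of the
Lie algebra `so(n)`. -/
noncomputable def Yso (n : ℕ) (r s : Fin n) : Matrix (Fin n) (Fin n) ℝ :=
  (Real.sqrt 2)⁻¹ • (Matrix.single r s 1 - Matrix.single s r 1)

/-- The special orthogonal group `SO(n) = {x : x·xᵀ = 1, det x = 1}`. -/
def SOGroup (n : ℕ) : Set (Matrix (Fin n) (Fin n) ℝ) :=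
  {x | x * x.transpose = 1 ∧ x.det = 1}

/-!
Both sums are symmetric in `(r, s)` and vanish on the diagonal, so each is half the sum over all
ordered pairs. Over all pairs, `∑ Y_rs² = (1 - n) • 1` (the Casimir element of `so(n)` acting on
`ℝⁿ`), which gives `τ`. Expanding `(x Y_rs)_{jα} = (x_{jr} δ_{sα} - x_{js} δ_{rα}) / √2` gives
`∑ (x Y_rs)_{jα} (x Y_rs)_{kβ} = δ_{αβ} (x xᵀ)_{jk} - x_{jβ} x_{kα}`, and `x xᵀ = 1` gives `κ`.
-/

theorem sum_sum_eq_two_nsmul_sum_sum_ite_lt {ι M : Type*} [Fintype ι] [LinearOrder ι]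
    [AddCommMonoid M] (f : ι → ι → M) (hsymm : ∀ r s, f s r = f r s) (hdiag : ∀ r, f r r = 0) :
    ∑ r, ∑ s, f r s = 2 • ∑ r, ∑ s, if r < s then f r s else 0 := by
  have hsplit : ∀ r s, f r s = (if r < s then f r s else 0) + (if s < r then f r s else 0) := by
    intro r s
    rcases lt_trichotomy r s with h | rfl | h
    · simp [h, h.not_gt]
    · simp [hdiag]
    · simp [h, h.not_gt]
  calc ∑ r, ∑ s, f r s
      = (∑ r, ∑ s, if r < s then f r s else 0) + ∑ r, ∑ s, if s < r then f r s else 0 := by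
        simp only [← Finset.sum_add_distrib, ← hsplit]
    _ = (∑ r, ∑ s, if r < s then f r s else 0) + ∑ r, ∑ s, if r < s then f r s else 0 := by
        rw [Finset.sum_comm (f := fun r s => if s < r then f r s else 0)]
        simp only [hsymm]
    _ = 2 • ∑ r, ∑ s, if r < s then f r s else 0 := (two_nsmul _).symm

lemma Yso_swap (n : ℕ) (r s : Fin n) : Yso n s r = -Yso n r s := by
  rw [Yso, Yso, ← smul_neg, neg_sub]

lemma Yso_self (n : ℕ) (r : Fin n) : Yso n r r = 0 := by
  simp [Yso]

lemma mul_Yso_apply {m : Type*} {n : ℕ} (x : Matrix m (Fin n) ℝ) (r s : Fin n) (j : m)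
    (α : Fin n) :
    (x * Yso n r s) j α =
      (Real.sqrt 2)⁻¹ * ((if s = α then x j r else 0) - (if r = α then x j s else 0)) := by
  simp only [Yso, Matrix.mul_apply, Matrix.smul_apply, Matrix.sub_apply, Matrix.single_apply,
    smul_eq_mul, mul_sub, mul_ite, ite_and, mul_one, mul_zero, Finset.sum_sub_distrib,
    Finset.sum_ite_eq, Finset.mem_univ, if_true]
  ring_nf

lemma sum_Yso_mul_Yso (n : ℕ) :
    ∑ r, ∑ s, Yso n r s * Yso n r s = (1 - n : ℝ) • 1 := by
  ext i l
  simp only [Matrix.sum_apply, mul_Yso_apply]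
  simp [Yso, Matrix.single_apply, Matrix.one_apply, ite_and, mul_sub, Finset.sum_sub_distrib,
    TsirelsonInequality.sqrt_two_inv_mul_self, eq_comm]
  split_ifs <;> ring

lemma sum_mul_Yso_mul_Yso_apply {m : Type*} {n : ℕ} (x : Matrix m (Fin n) ℝ) (j : m)
    (α : Fin n) :
    ∑ r, ∑ s, (x * Yso n r s * Yso n r s) j α = (1 - n) * x j α := by
  simp only [Matrix.mul_assoc, ← Matrix.sum_apply, ← Matrix.mul_sum, sum_Yso_mul_Yso]
  simp

lemma sum_mul_Yso_apply_mul_mul_Yso_apply {m : Type*} {n : ℕ} (x : Matrix m (Fin n) ℝ)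
    (j k : m) (α β : Fin n) :
    ∑ r, ∑ s, (x * Yso n r s) j α * (x * Yso n r s) k β
      = (if α = β then (x * xᵀ) j k else 0) - x j β * x k α := by
  simp only [mul_Yso_apply, mul_mul_mul_comm _ _ (Real.sqrt 2)⁻¹, TsirelsonInequality.sqrt_two_inv_mul_self,
    ← Finset.mul_sum]
  simp [Matrix.mul_apply, mul_sub, sub_mul, Finset.sum_sub_distrib, eq_comm (a := β)]
  split_ifs <;> ring

theorem stmt_15_general (n : ℕ) (x : Matrix (Fin n) (Fin n) ℝ)
    (hx : x ∈ SOGroup n) (j k α β : Fin n) :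
    (∑ r : Fin n, ∑ s : Fin n, if r < s then (x * Yso n r s * Yso n r s) j α else 0)
      = -(((n : ℝ) - 1) / 2) * x j α ∧
    (∑ r : Fin n, ∑ s : Fin n, if r < s then (x * Yso n r s) j α * (x * Yso n r s) k β else 0)
      = -(1 / 2 : ℝ) *
          (x k α * x j β - (if k = j then 1 else 0) * (if α = β then 1 else 0)) := by
  constructor
  · have hfull := sum_sum_eq_two_nsmul_sum_sum_ite_lt
      (fun r s => (x * Yso n r s * Yso n r s) j α)
      (fun r s => by simp only [Yso_swap n r s, Matrix.mul_neg, Matrix.neg_mul, neg_neg])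
      (by simp [Yso_self])
    rw [sum_mul_Yso_mul_Yso_apply, two_nsmul] at hfull
    linarith
  · have hfull := sum_sum_eq_two_nsmul_sum_sum_ite_lt
      (fun r s => (x * Yso n r s) j α * (x * Yso n r s) k β)
      (fun r s => by simp only [Yso_swap n r s, Matrix.mul_neg, Matrix.neg_apply, neg_mul_neg])
      (by simp [Yso_self])
    rw [sum_mul_Yso_apply_mul_mul_Yso_apply, hx.1, Matrix.one_apply, two_nsmul] at hfull
    simp only [eq_comm (a := k)]
    split_ifs at hfull ⊢ <;> linarith

/-- Lemma 9.1: the matrix coefficients `x_{jα}` of the standard representation of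
`SO(n)` satisfy `τ(x_{jα}) = -((n-1)/2)·x_{jα}` and
`κ(x_{jα}, x_{kβ}) = -(1/2)·(x_{kα}·x_{jβ} - δ_{kj}·δ_{αβ})`, where
`τ(F)(x) = Σ_{r<s} F(x·Y_rs·Y_rs)` and `κ(F,G)(x) = Σ_{r<s} F(x·Y_rs)·G(x·Y_rs)`. -/
theorem stmt_15 (n : ℕ) (hn : 2 ≤ n) (x : Matrix (Fin n) (Fin n) ℝ)
    (hx : x ∈ SOGroup n) (j k α β : Fin n) :
    (∑ r : Fin n, ∑ s : Fin n, if r < s then (x * Yso n r s * Yso n r s) j α else 0)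
      = -(((n : ℝ) - 1) / 2) * x j α ∧
    (∑ r : Fin n, ∑ s : Fin n, if r < s then (x * Yso n r s) j α * (x * Yso n r s) k β else 0)
      = -(1 / 2 : ℝ) *
          (x k α * x j β - (if k = j then 1 else 0) * (if α = β then 1 else 0)) :=
  stmt_15_general n x hx j k α β
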